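/- Let m = 5i with i ≥ 2 and let e be the length-m bit sequence with 1-bits exactly at positions {0,...,i-1} ∪ {2i,3i,4i}. Let R₄ be the set of length-m bit sequences y of Hamming weight 4 covered by e such that the 1-bits of y at positions ≥ i are exactly {2i, 3i, 4i} and exactly one position in {0,...,i-1} carries a 1. Then |R₄| = i, and if τ^j(y) is covered by e for some y ∈ R₄, then j ≡ 0 mod m. -/

import Mathlib

/-!
An element of `R₄` is determined by its single bit `a < i`: it is `2^a + 2^(2i) + 2^(3i) + 2^(4i)`,
so `|R₄| = i`. If a cyclic shift by `j` keeps the bits `a, 2i, 3i, 4i` inside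
`{0,…,i-1} ∪ {2i,3i,4i}`, the three bits `2i, 3i, 4i` already force `j ≡ 0` or `j ≡ -i`, and
the shift by `-i` moves `a` into `[i, 2i)`.
-/

open Finset

-- A bit sequence of length `m` is a natural number `x < 2 ^ m`, its bit `j` being `x.testBit j`.
def R₄ (i m : ℕ) : Finset ℕ :=
  (Finset.range (2 ^ m)).filter (fun x =>
    ((Finset.range m).filter (fun j => x.testBit j = true)).card = 4 ∧
    (∀ j ∈ Finset.range m, x.testBit j = true →
      (j < i ∨ j = 2 * i ∨ j = 3 * i ∨ j = 4 * i)) ∧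
    x.testBit (2 * i) = true ∧ x.testBit (3 * i) = true ∧
    x.testBit (4 * i) = true ∧
    (∀ j ∈ Finset.range m, i ≤ j → j ≠ 2 * i → j ≠ 3 * i → j ≠ 4 * i →
      x.testBit j = false) ∧
    ((Finset.range i).filter (fun j => x.testBit j = true)).card = 1)

theorem Nat.testBit_sum_two_pow (s : Finset ℕ) (n : ℕ) :
    (∑ k ∈ s, 2 ^ k).testBit n = true ↔ n ∈ s := by
  rw [← Nat.mem_bitIndices, ← List.mem_toFinset, toFinset_bitIndices_sum_two_pow]

theorem Nat.eq_sum_two_pow_of_testBit_iff {x : ℕ} {s : Finset ℕ}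
    (h : ∀ n, x.testBit n = true ↔ n ∈ s) : x = ∑ k ∈ s, 2 ^ k :=
  Nat.eq_of_testBit_eq fun n => Bool.eq_iff_iff.2 <| (h n).trans (testBit_sum_two_pow s n).symm

theorem Nat.exists_add_mod_eq {m p j : ℕ} (hp : p < m) (hj : j ≤ m) :
    ∃ k < m, (k + j) % m = p ∧ (k + j = p ∨ k + j = p + m) := by
  rcases le_or_gt j p with hjp | hpj
  · exact ⟨p - j, by omega, by rw [Nat.sub_add_cancel hjp, Nat.mod_eq_of_lt hp], .inl (by omega)⟩
  · refine ⟨p + m - j, by omega, ?_, .inr (by omega)⟩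
    rw [show p + m - j + j = p + m by omega, Nat.add_mod_right, Nat.mod_eq_of_lt hp]

section R₄

variable {i m a : ℕ}

theorem sum_two_pow_mem_R₄ (ha : a < i) (hm : 4 * i < m) :
    ∑ k ∈ ({a, 2 * i, 3 * i, 4 * i} : Finset ℕ), 2 ^ k ∈ R₄ i m := by
  simp only [R₄, mem_filter, mem_range, ← Bool.not_eq_true, Nat.testBit_sum_two_pow]
  refine ⟨Nat.geomSum_lt le_rfl (by simp; omega), ?_, by simp; omega, by simp, by simp, by simp,
    fun j _ hij => by simp; omega, ?_⟩
  · rw [filter_mem_eq_inter, inter_eq_right.2 (by intro n; simp; omega)]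
    rw [card_insert_of_notMem (by simp; omega), card_insert_of_notMem (by simp; omega),
      card_pair (by omega)]
  · rw [card_eq_one]
    exact ⟨a, by ext; simp; omega⟩

theorem exists_sum_two_pow_eq_of_mem_R₄ {x : ℕ} (hx : x ∈ R₄ i m) :
    ∃ a < i, ∑ k ∈ ({a, 2 * i, 3 * i, 4 * i} : Finset ℕ), 2 ^ k = x := by
  simp only [R₄, mem_filter, mem_range] at hx
  obtain ⟨hx, -, -, h2i, h3i, h4i, hhigh, hlow⟩ := hx
  obtain ⟨a, ha⟩ := card_eq_one.1 hlow
  have hai : a < i := mem_range.1 (mem_filter.1 (ha ▸ mem_singleton_self a)).1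
  have hlow_iff : ∀ n < i, x.testBit n = true ↔ n = a := fun n hn => by
    simpa [hn] using congrArg (n ∈ ·) ha
  refine ⟨a, hai, .symm <| Nat.eq_sum_two_pow_of_testBit_iff fun n => ⟨fun hn => ?_, fun hn => ?_⟩⟩
  · have hnm : n < m := (Nat.pow_lt_pow_iff_right (by norm_num)).1 <|
      (Nat.ge_two_pow_of_testBit hn).trans_lt hx
    by_cases hni : n < i
    · simp [(hlow_iff n hni).1 hn]
    · by_contra hnS
      simp only [mem_insert, mem_singleton, not_or] at hnS
      rw [hhigh n hnm (by omega) hnS.2.1 hnS.2.2.1 hnS.2.2.2] at hn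
      exact Bool.false_ne_true hn
  · simp only [mem_insert, mem_singleton] at hn
    rcases hn with rfl | rfl | rfl | rfl
    exacts [(hlow_iff n hai).2 rfl, h2i, h3i, h4i]

theorem R₄_eq_image (hm : 5 * i ≤ m) :
    R₄ i m = (range i).image fun a => ∑ k ∈ ({a, 2 * i, 3 * i, 4 * i} : Finset ℕ), 2 ^ k := by
  ext x
  simp only [mem_image, mem_range]
  exact ⟨exists_sum_two_pow_eq_of_mem_R₄, fun ⟨a, ha, hx⟩ => hx ▸ sum_two_pow_mem_R₄ ha (by omega)⟩

theorem card_R₄ (hm : 5 * i ≤ m) : (R₄ i m).card = i := by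
  rw [R₄_eq_image hm, card_image_of_injOn, card_range]
  intro a ha b hb hab
  simp only at hab
  have := (Nat.testBit_sum_two_pow _ a).1 (hab ▸ (Nat.testBit_sum_two_pow _ a).2 (by simp))
  simp only [coe_range, Set.mem_Iio, mem_insert, mem_singleton] at ha hb this
  omega

end R₄

theorem eq_zero_of_forall_shift_covered {i a j : ℕ} (ha : a < i) (hj : j < 5 * i)
    (H : ∀ k < 5 * i, (k + j) % (5 * i) ∈ ({a, 2 * i, 3 * i, 4 * i} : Finset ℕ) →
      k < i ∨ k = 2 * i ∨ k = 3 * i ∨ k = 4 * i) : j = 0 := by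
  have hcov : ∀ p ∈ ({a, 2 * i, 3 * i, 4 * i} : Finset ℕ), ∃ k, (k + j = p ∨ k + j = p + 5 * i) ∧
      (k < i ∨ k = 2 * i ∨ k = 3 * i ∨ k = 4 * i) := fun p hp => by
    obtain ⟨k, hk, hkp, hkj⟩ :=
      Nat.exists_add_mod_eq (p := p) (by simp only [mem_insert, mem_singleton] at hp; omega) hj.le
    exact ⟨k, hkj, H k hk (hkp ▸ hp)⟩
  obtain ⟨k₁, _, _⟩ := hcov a (by simp)
  obtain ⟨k₂, _, _⟩ := hcov (2 * i) (by simp)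
  obtain ⟨k₃, _, _⟩ := hcov (3 * i) (by simp)
  obtain ⟨k₄, _, _⟩ := hcov (4 * i) (by simp)
  omega

theorem stmt_10_general (i m : ℕ) (hm : m = 5 * i) :
    (((Finset.range (2 ^ m)).filter (fun x =>
        ((Finset.range m).filter (fun j => x.testBit j = true)).card = 4 ∧
        (∀ j ∈ Finset.range m, x.testBit j = true →
          (j < i ∨ j = 2 * i ∨ j = 3 * i ∨ j = 4 * i)) ∧
        x.testBit (2 * i) = true ∧ x.testBit (3 * i) = true ∧
        x.testBit (4 * i) = true ∧
        (∀ j ∈ Finset.range m, i ≤ j → j ≠ 2 * i → j ≠ 3 * i → j ≠ 4 * i →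
          x.testBit j = false) ∧
        ((Finset.range i).filter (fun j => x.testBit j = true)).card = 1)).card = i) ∧
    (∀ x ∈ (Finset.range (2 ^ m)).filter (fun x =>
        ((Finset.range m).filter (fun j => x.testBit j = true)).card = 4 ∧
        (∀ j ∈ Finset.range m, x.testBit j = true →
          (j < i ∨ j = 2 * i ∨ j = 3 * i ∨ j = 4 * i)) ∧
        x.testBit (2 * i) = true ∧ x.testBit (3 * i) = true ∧
        x.testBit (4 * i) = true ∧
        (∀ j ∈ Finset.range m, i ≤ j → j ≠ 2 * i → j ≠ 3 * i → j ≠ 4 * i →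
          x.testBit j = false) ∧
        ((Finset.range i).filter (fun j => x.testBit j = true)).card = 1),
      ∀ j < m, (∀ k < m, x.testBit ((k + j) % m) = true →
        (k < i ∨ k = 2 * i ∨ k = 3 * i ∨ k = 4 * i)) → j = 0) := by
  subst hm
  refine ⟨card_R₄ le_rfl, fun x hx j hj H => ?_⟩
  obtain ⟨a, ha, rfl⟩ := exists_sum_two_pow_eq_of_mem_R₄ hx
  exact eq_zero_of_forall_shift_covered ha hj fun k hk hkS =>
    H k hk ((Nat.testBit_sum_two_pow _ _).2 hkS)

theorem stmt_10 (i m : ℕ) (hi : 2 ≤ i) (hm : m = 5 * i) :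
    (((Finset.range (2 ^ m)).filter (fun x =>
        ((Finset.range m).filter (fun j => x.testBit j = true)).card = 4 ∧
        (∀ j ∈ Finset.range m, x.testBit j = true →
          (j < i ∨ j = 2 * i ∨ j = 3 * i ∨ j = 4 * i)) ∧
        x.testBit (2 * i) = true ∧ x.testBit (3 * i) = true ∧
        x.testBit (4 * i) = true ∧
        (∀ j ∈ Finset.range m, i ≤ j → j ≠ 2 * i → j ≠ 3 * i → j ≠ 4 * i →
          x.testBit j = false) ∧
        ((Finset.range i).filter (fun j => x.testBit j = true)).card = 1)).card = i) ∧
    (∀ x ∈ (Finset.range (2 ^ m)).filter (fun x =>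
        ((Finset.range m).filter (fun j => x.testBit j = true)).card = 4 ∧
        (∀ j ∈ Finset.range m, x.testBit j = true →
          (j < i ∨ j = 2 * i ∨ j = 3 * i ∨ j = 4 * i)) ∧
        x.testBit (2 * i) = true ∧ x.testBit (3 * i) = true ∧
        x.testBit (4 * i) = true ∧
        (∀ j ∈ Finset.range m, i ≤ j → j ≠ 2 * i → j ≠ 3 * i → j ≠ 4 * i →
          x.testBit j = false) ∧
        ((Finset.range i).filter (fun j => x.testBit j = true)).card = 1),
      ∀ j < m, (∀ k < m, x.testBit ((k + j) % m) = true →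
        (k < i ∨ k = 2 * i ∨ k = 3 * i ∨ k = 4 * i)) → j = 0) :=
  stmt_10_general i m hm
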